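/- Let M = D + u_1 (the operator a ↦ D(a) + u_1·a). Then for all a, b ∈ 𝓕: [M(a), M(b)] = M( b_*(M(a)) − a_*(M(b)) + D(a)·b − D(b)·a ). In particular M is pre-Hamiltonian: the Lie bracket of any two elements of the image of M again lies in the image of M. -/

import Mathlib

open MvPolynomial

noncomputable section

/-- Variables of the ring 𝓕 = K[x, u₀, u₁, u₂, …]. -/
inductive FVar : Type
  | x : FVar
  | u : ℕ → FVar
  deriving DecidableEq

/-- The ring 𝓕. -/
abbrev Fc (K : Type*) [CommSemiring K] : Type _ := MvPolynomial FVar K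

variable {K : Type*} [Field K] [CharZero K]

/-- `D` is the total derivative with respect to x: the K-derivation with
D(x) = 1 and D(uᵢ) = u_{i+1}. -/
structure IsTotalDer (D : Derivation K (Fc K) (Fc K)) : Prop where
  hDx : D (X FVar.x) = 1
  hDu : ∀ i : ℕ, D (X (FVar.u i)) = X (FVar.u (i + 1))

/-- The Fréchet derivative a_* = Σ_{i≥0} (∂a/∂uᵢ)·D^i applied to `g`. -/
def frechet (D : Derivation K (Fc K) (Fc K)) (a g : Fc K) : Fc K :=
  ∑ᶠ i : ℕ, pderiv (FVar.u i) a * (⇑D)^[i] g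

/-- The Lie bracket [f, g] = g_*(f) − f_*(g). -/
def lieBracket (D : Derivation K (Fc K) (Fc K)) (f g : Fc K) : Fc K :=
  frechet D g f - frechet D f g

/-! For fixed `g`, the map `a ↦ a_*(g)` is the `K`-derivation of `𝓕` sending `x ↦ 0` and
`uᵢ ↦ Dⁱ g`: the sum defining `a_*(g)` only runs over the finitely many `uᵢ` occurring in `a`.
Its commutator with `D` is again a derivation, and it vanishes on the generators because
`D(x) = 1` is a constant and `D(uᵢ) = u_{i+1}`; hence `(D a)_* = D ∘ a_*`. Together with the
Leibniz rule and `(u₁)_* = D` this gives `(M c)_*(g) = M(c_*(g)) + c·D(g)`, and the bracket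
identity is then a direct expansion. -/

theorem Derivation.finset_sum_apply {R A M ι : Type*} [CommSemiring R] [CommSemiring A]
    [AddCommMonoid M] [Algebra R A] [Module A M] [Module R M] (s : Finset ι)
    (f : ι → Derivation R A M) (a : A) : (∑ i ∈ s, f i) a = ∑ i ∈ s, f i a := by
  rw [← Derivation.coeFnAddMonoidHom_apply, map_sum, Finset.sum_apply]
  rfl

section Frechet

omit [CharZero K]

variable (D : Derivation K (Fc K) (Fc K))

def frechetOnVars (g : Fc K) : FVar → Fc K
  | .x => 0
  | .u i => (⇑D)^[i] g

def frechetDerivation (g : Fc K) : Derivation K (Fc K) (Fc K) :=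
  mkDerivation K (frechetOnVars D g)

theorem frechet_eq_frechetDerivation (a g : Fc K) :
    frechet D a g = frechetDerivation D g a := by
  classical
  let S := a.vars.preimage FVar.u fun _ _ _ _ h => FVar.u.inj h
  have hS : ∀ i ∉ S, pderiv (FVar.u i) a = 0 := fun i hi =>
    pderiv_eq_zero_of_notMem_vars fun hv => hi (Finset.mem_preimage.mpr hv)
  have hfrechet : frechet D a g = ∑ i ∈ S, pderiv (FVar.u i) a * (⇑D)^[i] g :=
    finsum_eq_sum_of_support_subset _ fun i hi => by
      by_contra h
      exact hi (by simp [hS i h])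
  have hvars : Set.EqOn (frechetDerivation D g ∘ X)
      ((∑ i ∈ S, (⇑D)^[i] g • pderiv (FVar.u i) : Derivation K (Fc K) (Fc K)) ∘ X) a.vars := by
    rintro (_ | j) hv
    · simp [frechetDerivation, frechetOnVars, Derivation.finset_sum_apply, pderiv_X]
    · have hj : j ∈ S := Finset.mem_preimage.mpr hv
      simp [frechetDerivation, frechetOnVars, Derivation.finset_sum_apply, pderiv_X,
        Pi.single_apply, hj]
  rw [hfrechet, derivation_eqOn_supported hvars (mem_supported_vars a),
    Derivation.finset_sum_apply]
  simp [mul_comm]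

theorem frechetDerivation_commutator_eq_zero (hD : IsTotalDer D) (g : Fc K) :
    ⁅frechetDerivation D g, D⁆ = 0 := by
  ext (_ | i)
  · simp [Derivation.commutator_apply, hD.hDx, frechetDerivation, frechetOnVars]
  · simp [Derivation.commutator_apply, hD.hDu, frechetDerivation, frechetOnVars,
      Function.iterate_succ_apply']

theorem frechet_totalDer (hD : IsTotalDer D) (a g : Fc K) :
    frechet D (D a) g = D (frechet D a g) := by
  have h := congr($(frechetDerivation_commutator_eq_zero D hD g) a)
  rw [Derivation.commutator_apply, Derivation.zero_apply, sub_eq_zero] at h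
  simp only [frechet_eq_frechetDerivation, h]

theorem frechet_X_u (i : ℕ) (g : Fc K) : frechet D (X (FVar.u i)) g = (⇑D)^[i] g := by
  rw [frechet_eq_frechetDerivation, frechetDerivation, mkDerivation_X, frechetOnVars]

theorem frechet_totalDer_add_X_u_one_mul (hD : IsTotalDer D) (c g : Fc K) :
    frechet D (D c + X (FVar.u 1) * c) g =
      D (frechet D c g) + X (FVar.u 1) * frechet D c g + c * D g := by
  have h := frechet_totalDer D hD c g
  have h1 := frechet_X_u D 1 g
  simp only [frechet_eq_frechetDerivation, Function.iterate_one] at h h1 ⊢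
  rw [map_add, Derivation.leibniz, h, h1, smul_eq_mul, smul_eq_mul]
  ring

end Frechet

/-- for M = D + u₁,
[M(a), M(b)] = M(b_*(M(a)) − a_*(M(b)) + D(a)·b − D(b)·a) for all a, b;
in particular M is pre-Hamiltonian. -/
theorem statement15
    (D : Derivation K (Fc K) (Fc K)) (hD : IsTotalDer D)
    (M : Fc K → Fc K) (hM : ∀ a, M a = D a + X (FVar.u 1) * a) :
    (∀ a b : Fc K,
      lieBracket D (M a) (M b) =
        M (frechet D b (M a) - frechet D a (M b) + D a * b - D b * a)) ∧
    (∀ f g : Fc K, f ∈ Set.range M → g ∈ Set.range M →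
      lieBracket D f g ∈ Set.range M) := by
  have bracket_M : ∀ a b : Fc K, lieBracket D (M a) (M b) =
      M (frechet D b (M a) - frechet D a (M b) + D a * b - D b * a) := by
    intro a b
    simp only [lieBracket, hM, frechet_totalDer_add_X_u_one_mul D hD, map_add, map_sub,
      Derivation.leibniz, smul_eq_mul]
    ring
  refine ⟨bracket_M, ?_⟩
  rintro f g ⟨a, rfl⟩ ⟨b, rfl⟩
  exact ⟨_, (bracket_M a b).symm⟩
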